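/- Let G be a finite group. Then the chromatic number of the complement of the enhanced power graph of G equals its clique number, and both equal the number of maximal cyclic subgroups of G; in particular, the complement of the enhanced power graph of G is weakly perfect. -/

import Mathlib

/-- A subgroup `M` of `G` is a maximal cyclic subgroup if it is cyclic and is not properly
contained in any cyclic subgroup of `G` other than itself. -/
def IsMaximalCyclic {G : Type*} [Group G] (M : Subgroup G) : Prop :=
  (∃ g : G, M = Subgroup.zpowers g) ∧
    ∀ K : Subgroup G, (∃ g : G, K = Subgroup.zpowers g) → M ≤ K → M = K

/-- The complement of the enhanced power graph of a group `G`: distinct `x, y` are adjacent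
iff no cyclic subgroup of `G` contains both. -/
def coPE (G : Type*) [Group G] : SimpleGraph G where
  Adj x y := x ≠ y ∧ ¬∃ z : G, x ∈ Subgroup.zpowers z ∧ y ∈ Subgroup.zpowers z
  symm := ⟨by
    rintro x y ⟨h1, h2⟩
    exact ⟨h1.symm, fun ⟨z, hz⟩ => h2 ⟨z, hz.2, hz.1⟩⟩⟩
  loopless := ⟨by rintro x ⟨h, -⟩; exact h rfl⟩

/-!
Choosing for each element a maximal cyclic subgroup containing it (one exists since `G` is
finite) is a proper colouring of `coPE G`, because elements of the same colour lie in a common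
cyclic subgroup. Conversely, generators of two distinct maximal cyclic subgroups are adjacent: a
cyclic subgroup containing both would contain, hence equal, both subgroups. So there is a clique
and a colouring of the same size, the number of maximal cyclic subgroups.
-/

namespace SimpleGraph

variable {V α : Type*} [Finite V] [Finite α] {H : SimpleGraph V}

theorem chromaticNumber_eq_card_and_cliqueNum_eq_card_of_pairwise_adj (C : H.Coloring α)
    (f : α → V) (hf : Pairwise fun a b => H.Adj (f a) (f b)) :
    H.chromaticNumber = Nat.card α ∧ H.cliqueNum = Nat.card α := by
  classical
  have : Fintype α := Fintype.ofFinite α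
  have hcol : H.Colorable (Nat.card α) := Nat.card_eq_fintype_card (α := α) ▸ C.colorable
  have hinj : f.Injective := fun a b hab => by_contra fun hne => (hf hne).ne hab
  have hclique : H.IsClique (Finset.univ.image f : Finset V) := by
    rw [Finset.coe_image, Finset.coe_univ, Set.image_univ]
    rintro _ ⟨a, rfl⟩ _ ⟨b, rfl⟩ hne
    exact hf fun hab => hne (congrArg f hab)
  have hclique_card : Nat.card α ≤ H.cliqueNum := by
    simpa [Finset.card_image_of_injective _ hinj] using hclique.card_le_cliqueNum
  have hcliqueNum_le : H.cliqueNum ≤ Nat.card α := by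
    obtain ⟨s, hs⟩ := H.exists_isNClique_cliqueNum
    exact hs.card_eq ▸ hs.isClique.card_le_of_colorable hcol
  exact ⟨le_antisymm hcol.chromaticNumber_le (le_chromaticNumber_of_pairwise_adj le_rfl f hf),
    le_antisymm hcliqueNum_le hclique_card⟩

end SimpleGraph

lemma exists_isMaximalCyclic_mem {G : Type*} [Group G] [Finite G] (x : G) :
    ∃ M : Subgroup G, IsMaximalCyclic M ∧ x ∈ M := by
  obtain ⟨M, hM, hmax⟩ := Set.Finite.exists_maximalFor id
    {K : Subgroup G | (∃ g : G, K = Subgroup.zpowers g) ∧ x ∈ K} (Set.toFinite _)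
    ⟨Subgroup.zpowers x, ⟨x, rfl⟩, Subgroup.mem_zpowers x⟩
  exact ⟨M, ⟨hM.1, fun K hK hMK => le_antisymm hMK (hmax ⟨hK, hMK hM.2⟩ hMK)⟩, hM.2⟩

section coPE

variable {G : Type*} [Group G]

lemma not_coPE_adj_of_mem_cyclic {M : Subgroup G} (hM : ∃ g, M = Subgroup.zpowers g) {x y : G}
    (hx : x ∈ M) (hy : y ∈ M) : ¬(coPE G).Adj x y := by
  obtain ⟨g, rfl⟩ := hM
  exact fun hxy => hxy.2 ⟨g, hx, hy⟩

lemma coPE_adj_of_isMaximalCyclic {M N : Subgroup G} (hM : IsMaximalCyclic M)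
    (hN : IsMaximalCyclic N) (hMN : M ≠ N) {g h : G} (hg : M = Subgroup.zpowers g)
    (hh : N = Subgroup.zpowers h) : (coPE G).Adj g h := by
  refine ⟨fun hgh => hMN (by rw [hg, hh, hgh]), ?_⟩
  rintro ⟨z, hgz, hhz⟩
  have hMz := hM.2 _ ⟨z, rfl⟩ (hg ▸ Subgroup.zpowers_le.2 hgz)
  have hNz := hN.2 _ ⟨z, rfl⟩ (hh ▸ Subgroup.zpowers_le.2 hhz)
  exact hMN (hMz.trans hNz.symm)

noncomputable def coPE.coloringByMaximalCyclic [Finite G] :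
    (coPE G).Coloring {M : Subgroup G // IsMaximalCyclic M} :=
  SimpleGraph.Coloring.mk
    (fun x => ⟨_, (exists_isMaximalCyclic_mem x).choose_spec.1⟩)
    (fun {x y} hxy hcol => by
      obtain ⟨hM, hxM⟩ := (exists_isMaximalCyclic_mem x).choose_spec
      have hyM := (exists_isMaximalCyclic_mem y).choose_spec.2
      rw [Subtype.mk.injEq] at hcol
      exact not_coPE_adj_of_mem_cyclic hM.1 hxM (hcol ▸ hyM) hxy)

end coPE

theorem coPE_weakly_perfect {G : Type*} [Group G] [Finite G] :
    (coPE G).chromaticNumber = (coPE G).cliqueNum ∧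
    (coPE G).cliqueNum = Nat.card {M : Subgroup G // IsMaximalCyclic M} := by
  have hgen (M : {M : Subgroup G // IsMaximalCyclic M}) := M.2.1.choose_spec
  obtain ⟨hchrom, hclique⟩ :=
    SimpleGraph.chromaticNumber_eq_card_and_cliqueNum_eq_card_of_pairwise_adj
      coPE.coloringByMaximalCyclic (fun M => M.2.1.choose) fun M N hMN =>
        coPE_adj_of_isMaximalCyclic M.2 N.2 (Subtype.val_injective.ne hMN) (hgen M) (hgen N)
  exact ⟨hchrom.trans (congrArg _ hclique.symm), hclique⟩
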